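/- arXiv:1207.4029 — 5 statements merged into one kernel-verified Lean document; each statement's English description precedes it below -/
import Mathlib

section
/- Let X be a convex subset of ℝ^N, (Y,d) a metric space, L > 0, and f : X → Y a function such that the pointwise Lipschitz constant lip(f)(x) := limsup_{y→x} d(f(y),f(x))/‖y−x‖ satisfies lip(f)(x) ≤ L for all x ∈ X. Then f is globally L-Lipschitz on X. -/
open Filter Topology

noncomputable def elip {X Y : Type*} [MetricSpace X] [MetricSpace Y]
    (f : X → Y) (x : X) : ENNReal :=
  limsup (fun y => edist (f y) (f x) / edist y x) (𝓝[≠] x)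

/-- If `X ⊆ ℝ^N` is convex, `L > 0`, and `f : X → Y` satisfies `lip f x ≤ L` at
every `x ∈ X`, then `f` is globally `L`-Lipschitz. -/
theorem stmt0 {N : ℕ} {Y : Type*} [MetricSpace Y]
    (X : Set (EuclideanSpace ℝ (Fin N))) (hX : Convex ℝ X)
    (L : NNReal) (hL : 0 < L) (f : X → Y)
    (hf : ∀ x : X, elip f x ≤ L) : LipschitzWith L f := by
  classical
  have key : ∀ (ε : NNReal), 0 < ε → ∀ a b : X,
      dist (f b) (f a) ≤ ((L + ε : NNReal) : ℝ) * dist (b : EuclideanSpace ℝ (Fin N)) (a : EuclideanSpace ℝ (Fin N)) := by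
    intro ε hε a b
    set C : NNReal := L + ε with hC
    -- local eventual Lipschitz bound
    have loc : ∀ x : X, ∀ᶠ y in 𝓝 x, dist (f y) (f x) ≤ (C : ℝ) * dist y x := by
      intro x
      have h1 : elip f x < (C : ENNReal) :=
        lt_of_le_of_lt (hf x) (by exact_mod_cast lt_add_of_pos_right L hε)
      have h2 := Filter.eventually_lt_of_limsup_lt h1
      rw [eventually_nhdsWithin_iff] at h2
      filter_upwards [h2] with y hy
      rcases eq_or_ne y x with rfl | hyx
      · simp
      · have h3 := hy hyx
        have h0 : edist y x ≠ 0 := (edist_pos.mpr hyx).ne'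
        have hlt : edist (f y) (f x) ≤ (C : ENNReal) * edist y x :=
          ((ENNReal.div_lt_iff (Or.inl h0) (Or.inl (edist_ne_top y x))).mp h3).le
        have hfin : (C : ENNReal) * edist y x ≠ ⊤ :=
          ENNReal.mul_ne_top ENNReal.coe_ne_top (edist_ne_top y x)
        have := ENNReal.toReal_mono hfin hlt
        simpa [dist_edist, ENNReal.toReal_mul] using this
    -- continuity of f
    have hcont : Continuous f := by
      rw [continuous_iff_continuousAt]
      intro x
      rw [ContinuousAt, tendsto_iff_dist_tendsto_zero]
      apply squeeze_zero' (Eventually.of_forall fun _ => dist_nonneg) (loc x)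
      have : Tendsto (fun y : X => (C : ℝ) * dist y x) (𝓝 x) (𝓝 ((C : ℝ) * dist x x)) :=
        (continuous_const.mul ((continuous_id.dist continuous_const))).tendsto x
      simpa using this
    set d : ℝ := dist (b : EuclideanSpace ℝ (Fin N)) (a : EuclideanSpace ℝ (Fin N)) with hd
    set pt : ℝ → EuclideanSpace ℝ (Fin N) := fun t => (1 - t) • (a : EuclideanSpace ℝ (Fin N)) + t • (b : EuclideanSpace ℝ (Fin N)) with hpt
    set q : ℝ → ℝ := fun t => max 0 (min 1 t) with hqdef
    have hq : ∀ t, q t ∈ Set.Icc (0:ℝ) 1 := by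
      intro t
      constructor
      · exact le_max_left _ _
      · simp [hqdef]
    have hqt : ∀ t ∈ Set.Icc (0:ℝ) 1, q t = t := by
      intro t ht
      simp [hqdef, max_eq_right, min_eq_right, ht.1, ht.2]
    have hmem : ∀ t, pt (q t) ∈ X := by
      intro t
      have h := hq t
      exact hX a.2 b.2 (sub_nonneg.mpr h.2) h.1 (sub_add_cancel 1 (q t))
    set γ : ℝ → X := fun t => ⟨pt (q t), hmem t⟩ with hγ
    have hγ0 : γ 0 = a := by
      apply Subtype.ext
      simp [hγ, hqdef, hpt]
    have hγ1 : γ 1 = b := by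
      apply Subtype.ext
      simp [hγ, hqdef, hpt]
    have hγdist : ∀ s t : ℝ, s ∈ Set.Icc (0:ℝ) 1 → t ∈ Set.Icc (0:ℝ) 1 →
        dist (γ s) (γ t) = |s - t| * d := by
      intro s t hs ht
      have heq : pt s - pt t = (s - t) • ((b : EuclideanSpace ℝ (Fin N)) - (a : EuclideanSpace ℝ (Fin N))) := by
        simp only [hpt]; module
      rw [Subtype.dist_eq]
      simp only [hγ, hqt s hs, hqt t ht]
      rw [dist_eq_norm, heq, norm_smul, Real.norm_eq_abs, hd, dist_eq_norm]
    have hptc : Continuous pt := by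
      rw [hpt]; fun_prop
    have hqc : Continuous q := by
      rw [hqdef]; fun_prop
    have hγcont : Continuous γ := (hptc.comp hqc).subtype_mk _
    -- the set of good parameters
    set S : Set ℝ := {t : ℝ | t ∈ Set.Icc (0:ℝ) 1 ∧ dist (f (γ t)) (f a) ≤ (C : ℝ) * (t * d)}
      with hS
    have h0S : (0:ℝ) ∈ S := by
      refine ⟨⟨le_refl 0, zero_le_one⟩, ?_⟩
      rw [hγ0]
      simp
    have hSsub : S ⊆ Set.Icc (0:ℝ) 1 := fun t ht => ht.1
    have hSclosed : IsClosed S := by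
      have : S = Set.Icc (0:ℝ) 1 ∩ {t : ℝ | dist (f (γ t)) (f a) ≤ (C : ℝ) * (t * d)} := by
        ext t; simp [hS, Set.mem_inter_iff]
      rw [this]
      exact isClosed_Icc.inter (isClosed_le (((hcont.comp hγcont).dist continuous_const))
        (continuous_const.mul (continuous_id.mul continuous_const)))
    have hne : S.Nonempty := ⟨0, h0S⟩
    have hbdd : BddAbove S := (Bornology.IsBounded.subset (Metric.isBounded_Icc (0:ℝ) 1) hSsub).bddAbove
    set T : ℝ := sSup S with hT
    have hTS : T ∈ S := hSclosed.csSup_mem hne hbdd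
    have hT1 : T ≤ 1 := hTS.1.2
    have hT0 : 0 ≤ T := hTS.1.1
    have h1S : (1:ℝ) ∈ S := by
      rcases eq_or_lt_of_le hT1 with heq | hlt
      · rwa [heq] at hTS
      · exfalso
        have hev := (hγcont.tendsto T).eventually (loc (γ T))
        rw [Metric.eventually_nhds_iff] at hev
        obtain ⟨δ, hδ, hball⟩ := hev
        set t₀ : ℝ := min 1 (T + δ/2) with ht₀
        have hTt₀ : T < t₀ := lt_min hlt (by linarith)
        have ht₀1 : t₀ ≤ 1 := min_le_left _ _
        have ht₀0 : 0 ≤ t₀ := le_min zero_le_one (by linarith)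
        have ht₀Icc : t₀ ∈ Set.Icc (0:ℝ) 1 := ⟨ht₀0, ht₀1⟩
        have hdistt : dist t₀ T < δ := by
          rw [Real.dist_eq, abs_of_nonneg (by linarith)]
          have : t₀ ≤ T + δ/2 := min_le_right _ _
          linarith
        have hb := hball hdistt
        have hgd : dist (γ t₀) (γ T) = (t₀ - T) * d := by
          rw [hγdist t₀ T ht₀Icc hTS.1, abs_of_nonneg (by linarith)]
        have ht₀S : t₀ ∈ S := by
          refine ⟨ht₀Icc, ?_⟩
          have h5 : dist (f (γ t₀)) (f a) ≤ dist (f (γ t₀)) (f (γ T)) + dist (f (γ T)) (f a) :=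
            dist_triangle _ _ _
          have h6 := hTS.2
          rw [hgd] at hb
          calc dist (f (γ t₀)) (f a) ≤ (C : ℝ) * ((t₀ - T) * d) + (C : ℝ) * (T * d) := by
                linarith
            _ = (C : ℝ) * (t₀ * d) := by ring
        exact absurd (le_csSup hbdd ht₀S) (not_le.mpr hTt₀)
    have := h1S.2
    rw [hγ1] at this
    simpa [hC] using this
  -- conclude
  apply LipschitzWith.of_dist_le_mul
  intro x y
  refine le_of_forall_pos_le_add ?_
  intro δ hδ
  rcases eq_or_lt_of_le (dist_nonneg : (0:ℝ) ≤ dist x y) with hd0 | hdpos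
  · have h := key 1 one_pos y x
    rw [Subtype.dist_eq] at *
    rw [← hd0] at h ⊢
    simpa using le_trans h (by linarith)
  · set ε : NNReal := (δ / dist x y).toNNReal with hε
    have hεpos : 0 < ε := by
      rw [hε, Real.toNNReal_pos]
      positivity
    have h := key ε hεpos y x
    have hεd : (ε : ℝ) * dist x y = δ := by
      rw [hε, Real.coe_toNNReal _ (by positivity)]
      field_simp
    have hsub : dist (x : EuclideanSpace ℝ (Fin N)) (y : EuclideanSpace ℝ (Fin N)) = dist x y :=
      (Subtype.dist_eq x y).symm
    rw [hsub] at h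
    push_cast at h
    nlinarith [h]
end

section
/- Let (X,d) be a C-quasi-convex metric space (every pair of points x,y is joined by a rectifiable curve of length at most C·d(x,y)), (Y,d') a metric space, and f : X → Y with pointwise Lipschitz constant lip(f)(x) ≤ L at every point. Then f is CL-Lipschitz. -/
/-!
Fix `M > L`. Near every point `f` is `M`-Lipschitz, so along a curve `γ` the estimate
`d(f (γ t), f (γ 0)) ≤ M · Var(γ, [0, t])` propagates: the set of good parameters contains its
supremum and the supremum cannot lie below `1`. Applied to a quasi-convex curve this gives
`d(f x, f y) ≤ M · C · d(x, y)`, and `M ↓ L` finishes.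
-/

open Filter Topology Set

lemma eventually_edist_le_mul_of_elip_lt {X Y : Type*} [MetricSpace X] [MetricSpace Y]
    {f : X → Y} {x : X} {M : ENNReal} (h : elip f x < M) :
    ∀ᶠ y in 𝓝 x, edist (f y) (f x) ≤ M * edist y x := by
  have hquot : ∀ᶠ y in 𝓝[≠] x, edist (f y) (f x) / edist y x < M :=
    eventually_lt_of_limsup_lt h
  filter_upwards [eventually_nhdsWithin_iff.mp hquot] with y hy
  rcases eq_or_ne y x with rfl | hyx
  · simp
  · exact ((ENNReal.div_lt_iff (.inl (edist_pos.mpr hyx).ne') (.inl (edist_ne_top y x))).mp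
      (hy hyx)).le

section CurveEstimate

variable {X Y : Type*} [PseudoEMetricSpace X] [PseudoEMetricSpace Y]
  {f : X → Y} {γ : ℝ → X} {M : ENNReal} {a b : ℝ}

lemma edist_comp_le_mul_eVariationOn_Icc_of_le {t u : ℝ} (hat : a ≤ t) (htu : t ≤ u)
    (ht : edist (f (γ t)) (f (γ a)) ≤ M * eVariationOn γ (Icc a t))
    (hstep : edist (f (γ u)) (f (γ t)) ≤ M * edist (γ u) (γ t)) :
    edist (f (γ u)) (f (γ a)) ≤ M * eVariationOn γ (Icc a u) := by
  have hvar : edist (γ u) (γ t) ≤ eVariationOn γ (Icc t u) :=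
    eVariationOn.edist_le γ ⟨htu, le_rfl⟩ ⟨le_rfl, htu⟩
  have hsplit : eVariationOn γ (Icc a t) + eVariationOn γ (Icc t u) = eVariationOn γ (Icc a u) := by
    simpa using eVariationOn.Icc_add_Icc γ (s := univ) hat htu trivial
  calc edist (f (γ u)) (f (γ a))
      ≤ edist (f (γ u)) (f (γ t)) + edist (f (γ t)) (f (γ a)) := edist_triangle _ _ _
    _ ≤ M * eVariationOn γ (Icc t u) + M * eVariationOn γ (Icc a t) :=
        add_le_add (hstep.trans (mul_le_mul_right hvar M)) ht
    _ = M * eVariationOn γ (Icc a u) := by rw [← mul_add, add_comm, hsplit]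

lemma edist_comp_le_mul_eVariationOn_Icc
    (hloc : ∀ z, ∀ᶠ y in 𝓝 z, edist (f y) (f z) ≤ M * edist y z)
    (hγ : ContinuousOn γ (Icc a b)) (hab : a ≤ b) :
    edist (f (γ b)) (f (γ a)) ≤ M * eVariationOn γ (Icc a b) := by
  set A := {t ∈ Icc a b | edist (f (γ t)) (f (γ a)) ≤ M * eVariationOn γ (Icc a t)}
  have haA : a ∈ A := ⟨⟨le_rfl, hab⟩, by simp⟩
  have hbdd : BddAbove A := ⟨b, fun t ht => ht.1.2⟩
  set s := sSup A
  have hs : s ∈ Icc a b := ⟨le_csSup hbdd haA, csSup_le ⟨a, haA⟩ fun t ht => ht.1.2⟩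
  have hnear : ∀ T ⊆ Icc a b, s ∈ closure T →
      ∃ t ∈ T, edist (f (γ t)) (f (γ s)) ≤ M * edist (γ t) (γ s) := by
    intro T hT hsT
    have hev := eventually_nhdsWithin_iff.mp ((hγ s hs).eventually (hloc (γ s)))
    obtain ⟨t, htT, ht⟩ := ((mem_closure_iff_frequently.mp hsT).and_eventually hev).exists
    exact ⟨t, htT, ht (hT htT)⟩
  have hsA : s ∈ A := by
    obtain ⟨t, htA, ht⟩ := hnear A (fun t ht => ht.1) (csSup_mem_closure ⟨a, haA⟩ hbdd)
    refine ⟨hs, edist_comp_le_mul_eVariationOn_Icc_of_le htA.1.1 (le_csSup hbdd htA) htA.2 ?_⟩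
    rwa [edist_comm, edist_comm (γ s)]
  suffices s = b from this ▸ hsA.2
  by_contra hsb
  have hsb : s < b := hs.2.lt_of_ne hsb
  obtain ⟨t, ⟨hst, htb⟩, ht⟩ := hnear (Ioc s b) (fun t ht => ⟨hs.1.trans ht.1.le, ht.2⟩)
    (by rw [closure_Ioc hsb.ne]; exact ⟨le_rfl, hsb.le⟩)
  have htA : t ∈ A :=
    ⟨⟨hs.1.trans hst.le, htb⟩, edist_comp_le_mul_eVariationOn_Icc_of_le hs.1 hst.le hsA.2 ht⟩
  exact (le_csSup hbdd htA).not_gt hst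

end CurveEstimate

theorem stmt1_general {X Y : Type*} [MetricSpace X] [MetricSpace Y]
    (C L : NNReal)
    (hqc : ∀ x y : X, ∃ γ : ℝ → X, ContinuousOn γ (Set.Icc 0 1) ∧
      γ 0 = x ∧ γ 1 = y ∧
      eVariationOn γ (Set.Icc 0 1) ≤ ENNReal.ofReal (C * dist x y))
    (f : X → Y) (hf : ∀ x : X, elip f x ≤ L) :
    LipschitzWith (C * L) f := by
  intro x y
  obtain ⟨γ, hγ, rfl, rfl, hvar⟩ := hqc x y
  have hrhs : ((C * L : NNReal) : ENNReal) * edist (γ 0) (γ 1)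
      = L * ENNReal.ofReal (C * dist (γ 0) (γ 1)) := by
    rw [ENNReal.ofReal_mul C.coe_nonneg, ← edist_dist, ENNReal.ofReal_coe_nnreal,
      ENNReal.coe_mul]
    ring
  rw [hrhs, edist_comm]
  refine ENNReal.le_mul_of_forall_lt (.inr ENNReal.ofReal_ne_top) (.inl ENNReal.coe_ne_top)
    fun M hM K hK => ?_
  calc edist (f (γ 1)) (f (γ 0))
      ≤ M * eVariationOn γ (Icc 0 1) :=
        edist_comp_le_mul_eVariationOn_Icc
          (fun z => eventually_edist_le_mul_of_elip_lt ((hf z).trans_lt hM)) hγ zero_le_one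
    _ ≤ M * K := mul_le_mul_right (hvar.trans hK.le) M

/-- In a `C`-quasi-convex metric space, a function with pointwise Lipschitz
constant bounded by `L` everywhere is `C * L`-Lipschitz. -/
theorem stmt1 {X Y : Type*} [MetricSpace X] [MetricSpace Y]
    (C L : NNReal) (hC : 0 < C)
    (hqc : ∀ x y : X, ∃ γ : ℝ → X, ContinuousOn γ (Set.Icc 0 1) ∧
      γ 0 = x ∧ γ 1 = y ∧
      eVariationOn γ (Set.Icc 0 1) ≤ ENNReal.ofReal (C * dist x y))
    (f : X → Y) (hf : ∀ x : X, elip f x ≤ L) :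
    LipschitzWith (C * L) f :=
  stmt1_general C L hqc f hf
end

section
/- Let U ⊆ ℝ^N be open, Y a separable metric space, and f : U → Y a Lipschitz function. Then for almost every x₀ ∈ U, lip(f)(x₀) = sup_{p ∈ Y} ‖∇ d(f(·),p)(x₀)‖, where for each p ∈ Y the function x ↦ d(f(x),p) is Lipschitz (hence a.e. differentiable) and its gradient norm is taken to be 0 at non-differentiability points. -/
/-!
At every point, each `x ↦ dist (f x) p` is locally `C`-Lipschitz at `x` for every `C > lip f x`,
which bounds the norm of its derivative by `lip f x`.

For the converse, let `G n` be `K`-Lipschitz extensions of `dist (f ·) (e n)` for a dense sequence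
`e n`, and `h = sup_n ‖DG n‖`. Mollifying `G n` at scale `δ = ε |y - x|` and applying the mean value
inequality on `[x, y]` gives, uniformly in `n`,
`|G n y - G n x| ≤ |y - x| (h x + (4/ε)^N ⨍_{B(x, 2|y - x|)} |h - h x|) + 2 K ε |y - x|`.
At a Lebesgue point `x` of `h` the average tends to `0`, and density of `e` turns this into
`lip f x ≤ h x`.
-/

open Filter Topology MeasureTheory

/-- The pointwise Lipschitz constant of `f` at `x` relative to the set `U`. -/
noncomputable def lipOn {E Y : Type*} [NormedAddCommGroup E] [MetricSpace Y]
    (f : E → Y) (U : Set E) (x : E) : ℝ :=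
  limsup (fun y => dist (f y) (f x) / dist y x) (𝓝[U \ {x}] x)

open Metric

section LipOn

variable {E Y : Type*} [NormedAddCommGroup E] [MetricSpace Y] {f : E → Y} {U : Set E} {x : E}
  {K : NNReal}

lemma eventually_dist_div_le_of_lipschitzOnWith (hf : LipschitzOnWith K f U) (hx : x ∈ U) :
    ∀ᶠ y in 𝓝[U \ {x}] x, dist (f y) (f x) / dist y x ≤ K := by
  filter_upwards [self_mem_nhdsWithin] with y ⟨hyU, hyx⟩
  rw [div_le_iff₀ (dist_pos.2 hyx)]
  exact hf.dist_le_mul y hyU x hx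

lemma lipOn_eq_zero_of_subsingleton [Subsingleton E] : lipOn f U x = 0 := by
  have hempty : U \ {x} = ∅ :=
    Set.eq_empty_of_forall_notMem fun y hy => hy.2 (Subsingleton.elim y x)
  -- junk value: a `limsup` along `⊥` in `ℝ` is `sInf univ = 0`
  simp [lipOn, hempty, limsup_eq]

lemma eventually_dist_le_of_lipOn_lt (hU : IsOpen U) (hx : x ∈ U) (hf : LipschitzOnWith K f U)
    {C : ℝ} (hC : lipOn f U x < C) : ∀ᶠ y in 𝓝 x, dist (f y) (f x) ≤ C * dist y x := by
  have hlt := eventually_lt_of_limsup_lt hC ⟨K, eventually_dist_div_le_of_lipschitzOnWith hf hx⟩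
  filter_upwards [eventually_nhdsWithin_iff.1 hlt, hU.mem_nhds hx] with y hy hyU
  rcases eq_or_ne y x with rfl | hyx
  · simp
  · exact ((div_lt_iff₀ (dist_pos.2 hyx)).1 (hy ⟨hyU, hyx⟩)).le

variable [NormedSpace ℝ E] [Nontrivial E]

lemma neBot_nhdsWithin_diff_singleton (hU : IsOpen U) (hx : x ∈ U) : (𝓝[U \ {x}] x).NeBot := by
  rw [Set.sdiff_eq, Set.inter_comm,
    nhdsWithin_inter_of_mem' (mem_nhdsWithin_of_mem_nhds (hU.mem_nhds hx))]
  exact Module.punctured_nhds_neBot ℝ E x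

lemma lipOn_nonneg (hU : IsOpen U) (hx : x ∈ U) (hf : LipschitzOnWith K f U) :
    0 ≤ lipOn f U x := by
  have := neBot_nhdsWithin_diff_singleton hU hx
  exact le_limsup_of_frequently_le (.of_forall fun y => by positivity)
    ⟨K, eventually_dist_div_le_of_lipschitzOnWith hf hx⟩

lemma lipOn_le_of_forall_eventually_dist_le (hU : IsOpen U) (hx : x ∈ U) {C : ℝ}
    (h : ∀ η > 0, ∀ᶠ y in 𝓝 x, dist (f y) (f x) ≤ (C + η) * dist y x) : lipOn f U x ≤ C := by
  have := neBot_nhdsWithin_diff_singleton hU hx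
  refine le_of_forall_pos_le_add fun η hη => limsup_le_of_le
    (IsCoboundedUnder.of_frequently_ge (.of_forall fun y => by positivity)) ?_
  filter_upwards [nhdsWithin_le_nhds (h η hη), self_mem_nhdsWithin] with y hy hyx
  rwa [div_le_iff₀ (dist_pos.2 hyx.2)]

lemma norm_fderiv_dist_le_lipOn (hU : IsOpen U) (hx : x ∈ U) (hf : LipschitzOnWith K f U)
    (p : Y) : ‖fderiv ℝ (fun z => dist (f z) p) x‖ ≤ lipOn f U x := by
  by_cases hd : DifferentiableAt ℝ (fun z => dist (f z) p) x
  · refine le_of_forall_gt_imp_ge_of_dense fun C hC => hd.hasFDerivAt.le_of_lip'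
      ((lipOn_nonneg hU hx hf).trans hC.le) ?_
    filter_upwards [eventually_dist_le_of_lipOn_lt hU hx hf hC] with y hy
    rw [← dist_eq_norm, ← dist_eq_norm]
    exact (abs_dist_sub_le _ _ _).trans hy
  · rw [fderiv_zero_of_not_differentiableAt hd, norm_zero]
    exact lipOn_nonneg hU hx hf

lemma iSup_norm_fderiv_dist_le_lipOn (hU : IsOpen U) (hx : x ∈ U) (hf : LipschitzOnWith K f U) :
    ⨆ p : Y, ‖fderiv ℝ (fun z => dist (f z) p) x‖ ≤ lipOn f U x :=
  have : Nonempty Y := ⟨f x⟩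
  ciSup_le (norm_fderiv_dist_le_lipOn hU hx hf)

end LipOn

section Mollify

open Convolution ContinuousLinearMap

variable {E : Type*} [NormedAddCommGroup E] [NormedSpace ℝ E] [FiniteDimensional ℝ E]
  [MeasurableSpace E] [BorelSpace E] {μ : Measure E} [μ.IsAddHaarMeasure]
  (φ : ContDiffBump (0 : E)) {G : E → ℝ} {K : NNReal}

lemma ContDiffBump.contDiff_normed_convolution (hG : Continuous G) :
    ContDiff ℝ 1 (φ.normed μ ⋆[lsmul ℝ ℝ, μ] G) :=
  (φ.hasCompactSupport_normed (μ := μ)).contDiff_convolution_left _ φ.contDiff_normed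
    hG.locallyIntegrable

lemma ContDiffBump.fderiv_normed_convolution_apply (hG : LipschitzWith K G) (w v : E) :
    fderiv ℝ (φ.normed μ ⋆[lsmul ℝ ℝ, μ] G) w v
      = ∫ z, φ.normed μ z * fderiv ℝ G (w - z) v ∂μ := by
  set ρ := φ.normed μ
  have hline : ∀ a : E, HasDerivAt (fun s : ℝ => a + s • v) v 0 := fun a => by
    simpa using ((hasDerivAt_id (0 : ℝ)).smul_const v).const_add a
  have hconv : HasDerivAt (fun s : ℝ => (ρ ⋆[lsmul ℝ ℝ, μ] G) (w + s • v))
      (fderiv ℝ (ρ ⋆[lsmul ℝ ℝ, μ] G) w v) 0 := by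
    exact ((φ.contDiff_normed_convolution hG.continuous).differentiable one_ne_zero
      w).hasFDerivAt.comp_hasDerivAt_of_eq 0 (hline w) (by simp)
  have hdiff : ∀ᵐ z ∂μ, DifferentiableAt ℝ G (w - z) :=
    (Measure.measurePreserving_sub_left μ w).quasiMeasurePreserving.ae hG.ae_differentiableAt
  have hcont : ∀ s : ℝ, Continuous fun z => ρ z * G (w + s • v - z) := fun s =>
    φ.continuous_normed.mul (hG.continuous.comp (continuous_const.sub continuous_id))
  have hint : HasDerivAt (fun s : ℝ => ∫ z, ρ z * G (w + s • v - z) ∂μ)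
      (∫ z, ρ z * fderiv ℝ G (w - z) v ∂μ) 0 := by
    refine (hasDerivAt_integral_of_dominated_loc_of_lip (bound := fun z => ρ z * (K * ‖v‖))
      (F' := fun z => ρ z * fderiv ℝ G (w - z) v)
      univ_mem (.of_forall fun s => (hcont s).aestronglyMeasurable)
      ((hcont 0).integrable_of_hasCompactSupport φ.hasCompactSupport_normed.mul_right)
      (φ.continuous_normed.measurable.mul ((measurable_fderiv_apply_const ℝ G v).comp
        (measurable_const.sub measurable_id))).aestronglyMeasurable
      (.of_forall fun z => (LipschitzWith.of_dist_le_mul fun s t => ?_).lipschitzOnWith)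
      (φ.integrable_normed.mul_const _) ?_).2
    · have hρ : 0 ≤ ρ z := φ.nonneg_normed z
      rw [Real.coe_nnabs, abs_of_nonneg (by positivity), Real.dist_eq, ← mul_sub, abs_mul,
        abs_of_nonneg hρ, mul_assoc, mul_assoc]
      gcongr
      calc |G (w + s • v - z) - G (w + t • v - z)|
          ≤ K * dist (w + s • v - z) (w + t • v - z) := by
            rw [← Real.dist_eq]; exact hG.dist_le_mul _ _
        _ = K * (‖v‖ * dist s t) := by
            rw [dist_eq_norm, show w + s • v - z - (w + t • v - z) = (s - t) • v by module,
              norm_smul, Real.dist_eq, Real.norm_eq_abs]; ring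
    · filter_upwards [hdiff] with z hz
      simpa [add_sub_right_comm] using
        (hz.hasFDerivAt.comp_hasDerivAt_of_eq 0 (hline (w - z)) (by simp)).const_mul (ρ z)
  have heq : (fun s : ℝ => (ρ ⋆[lsmul ℝ ℝ, μ] G) (w + s • v))
      = fun s => ∫ z, ρ z * G (w + s • v - z) ∂μ := by
    ext s; simp [convolution_def]
  exact hconv.unique (heq ▸ hint)

lemma ContDiffBump.norm_fderiv_normed_convolution_le (hG : LipschitzWith K G) {h : E → ℝ}
    (hm : Measurable h) {C : ℝ} (hC : ∀ u, ‖h u‖ ≤ C) (hGh : ∀ u, ‖fderiv ℝ G u‖ ≤ h u) (w : E) :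
    ‖fderiv ℝ (φ.normed μ ⋆[lsmul ℝ ℝ, μ] G) w‖ ≤ ∫ z, φ.normed μ z * h (w - z) ∂μ := by
  have hρ : ∀ z, 0 ≤ φ.normed μ z := φ.nonneg_normed
  have hh : ∀ u, 0 ≤ h u := fun u => (norm_nonneg _).trans (hGh u)
  have hint : Integrable (fun z => φ.normed μ z * h (w - z)) μ :=
    φ.integrable_normed.mul_bdd (hm.comp (measurable_const.sub measurable_id)).aestronglyMeasurable
      (.of_forall fun z => hC _)
  refine opNorm_le_bound _ (integral_nonneg fun z => mul_nonneg (hρ z) (hh _)) fun v => ?_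
  rw [φ.fderiv_normed_convolution_apply hG, ← integral_mul_const]
  refine (norm_integral_le_integral_norm _).trans
    (integral_mono_of_nonneg (.of_forall fun z => norm_nonneg _) (hint.mul_const _)
      (.of_forall fun z => ?_))
  dsimp only
  rw [norm_mul, Real.norm_of_nonneg (hρ z), mul_assoc]
  exact mul_le_mul_of_nonneg_left ((le_opNorm _ _).trans (by gcongr; exact hGh _)) (hρ z)

lemma ContDiffBump.integral_normed_mul_comp_sub_le {h : E → ℝ} (hm : Measurable h) {C : ℝ}
    (hC : ∀ u, ‖h u‖ ≤ C) {x w : E} {r : ℝ} (hr : φ.rOut ≤ r) (hw : dist w x ≤ r) :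
    ∫ z, φ.normed μ z * h (w - z) ∂μ
      ≤ h x + (μ.real (closedBall 0 φ.rIn))⁻¹ * ∫ u in closedBall x (2 * r), ‖h u - h x‖ ∂μ := by
  set ρ := φ.normed μ
  set g : E → ℝ := fun u => ‖h u - h x‖
  set B := closedBall x (2 * r)
  set M := (μ.real (closedBall (0 : E) φ.rIn))⁻¹
  have hρ : ∀ z, 0 ≤ ρ z := φ.nonneg_normed
  have hg_meas : Measurable g := (hm.sub_const _).norm
  have hg_bdd : ∀ u, ‖g u‖ ≤ 2 * C := fun u => by
    rw [norm_norm]; linarith [norm_sub_le (h u) (h x), hC u, hC x]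
  have hρM : ∀ u, ρ (w - u) ≤ B.indicator (fun _ => M) u := by
    intro u
    by_cases hu : ρ (w - u) = 0
    · rw [hu]; exact Set.indicator_nonneg (fun _ _ => inv_nonneg.2 measureReal_nonneg) u
    · have hwu : dist u w < φ.rOut := by
        have : w - u ∈ ball 0 φ.rOut := φ.support_normed_eq (μ := μ) ▸ hu
        rwa [mem_ball_zero_iff, ← dist_eq_norm, dist_comm] at this
      rw [Set.indicator_of_mem (by rw [mem_closedBall]; linarith [dist_triangle u w x])]
      simpa only [one_div] using φ.normed_le_div_measure_closedBall_rIn μ (w - u)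
  have hBM : Integrable (B.indicator fun _ => M) μ :=
    (integrable_indicator_iff measurableSet_closedBall).2
      (integrableOn_const measure_closedBall_lt_top.ne)
  have hgw : Integrable (fun z => ρ z * g (w - z)) μ :=
    φ.integrable_normed.mul_bdd
      (hg_meas.comp (measurable_const.sub measurable_id)).aestronglyMeasurable
      (.of_forall fun z => hg_bdd _)
  calc ∫ z, ρ z * h (w - z) ∂μ ≤ ∫ z, (ρ z * h x + ρ z * g (w - z)) ∂μ := by
        refine integral_mono (φ.integrable_normed.mul_bdd
            (hm.comp (measurable_const.sub measurable_id)).aestronglyMeasurable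
            (.of_forall fun z => hC _)) ((φ.integrable_normed.mul_const _).add hgw) fun z => ?_
        rw [← mul_add]
        exact mul_le_mul_of_nonneg_left (sub_le_iff_le_add'.1 (Real.le_norm_self _)) (hρ z)
    _ = h x + ∫ u, ρ (w - u) * g u ∂μ := by
        rw [integral_add (φ.integrable_normed.mul_const _) hgw, integral_mul_const,
          φ.integral_normed, one_mul, ← integral_sub_left_eq_self (fun u => ρ (w - u) * g u) μ w]
        simp only [sub_sub_cancel]
    _ ≤ h x + ∫ u, B.indicator (fun _ => M) u * g u ∂μ :=
        (add_le_add_iff_left _).2 <| integral_mono ((φ.integrable_normed.comp_sub_left w).mul_bdd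
            hg_meas.aestronglyMeasurable (.of_forall hg_bdd))
          (hBM.mul_bdd hg_meas.aestronglyMeasurable (.of_forall hg_bdd))
          fun u => mul_le_mul_of_nonneg_right (hρM u) (norm_nonneg _)
    _ = h x + M * ∫ u in B, g u ∂μ := by
        simp_rw [← Set.indicator_mul_left]
        rw [integral_indicator measurableSet_closedBall, integral_const_mul]

end Mollify

section LebesguePoints

open Convolution ContinuousLinearMap Module

variable {E : Type*} [NormedAddCommGroup E] [NormedSpace ℝ E] [FiniteDimensional ℝ E]
  [MeasurableSpace E] [BorelSpace E] {μ : Measure E} [μ.IsAddHaarMeasure]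
  {G : E → ℝ} {K : NNReal} {h : E → ℝ} {C : ℝ}

lemma inv_measureReal_closedBall_mul_setIntegral (x y : E) {a b : ℝ} (ha : 0 < a) (hb : 0 < b)
    (f : E → ℝ) : (μ.real (closedBall y a))⁻¹ * ∫ u in closedBall x b, f u ∂μ
      = (b / a) ^ finrank ℝ E * ⨍ u in closedBall x b, f u ∂μ := by
  have hpos : 0 < μ.real (closedBall (0 : E) 1) :=
    ENNReal.toReal_pos (measure_closedBall_pos μ _ one_pos).ne' measure_closedBall_lt_top.ne
  rw [setAverage_eq, smul_eq_mul, Measure.addHaar_real_closedBall' μ x hb.le,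
    Measure.addHaar_real_closedBall' μ y ha.le, div_pow]
  field_simp

lemma LipschitzWith.abs_sub_le_of_norm_fderiv_le (hG : LipschitzWith K G) (hm : Measurable h)
    (hC : ∀ u, ‖h u‖ ≤ C) (hGh : ∀ u, ‖fderiv ℝ G u‖ ≤ h u) {x y : E} {δ : ℝ} (hδ : 0 < δ)
    (hδr : δ ≤ dist y x) :
    |G y - G x| ≤ dist y x * (h x + (μ.real (closedBall 0 (δ / 2)))⁻¹
      * ∫ u in closedBall x (2 * dist y x), ‖h u - h x‖ ∂μ) + 2 * (K * δ) := by
  let φ : ContDiffBump (0 : E) := ⟨δ / 2, δ, by positivity, by linarith⟩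
  set c := φ.normed μ ⋆[lsmul ℝ ℝ, μ] G
  have hderiv : ∀ w ∈ closedBall x (dist y x), ‖fderiv ℝ c w‖
      ≤ h x + (μ.real (closedBall 0 (δ / 2)))⁻¹
        * ∫ u in closedBall x (2 * dist y x), ‖h u - h x‖ ∂μ := fun w hw =>
    (φ.norm_fderiv_normed_convolution_le hG hm hC hGh w).trans
      (φ.integral_normed_mul_comp_sub_le hm hC hδr hw)
  have hmv := (convex_closedBall x (dist y x)).norm_image_sub_le_of_norm_fderiv_le
    (fun w _ => (φ.contDiff_normed_convolution hG.continuous).differentiable one_ne_zero w)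
    hderiv (mem_closedBall_self dist_nonneg) (mem_closedBall.2 le_rfl)
  have happrox : ∀ a, dist (c a) (G a) ≤ K * δ := fun a =>
    φ.dist_normed_convolution_le hG.continuous.aestronglyMeasurable fun u hu =>
      (hG.dist_le_mul u a).trans (by gcongr; exact (mem_ball.1 hu).le)
  rw [← dist_eq_norm, ← dist_eq_norm, mul_comm] at hmv
  rw [← Real.dist_eq]
  linarith [dist_triangle4 (G y) (c y) (c x) (G x), dist_comm (G y) (c y), happrox x, happrox y]

lemma ae_eventually_abs_sub_le_of_norm_fderiv_le {ι : Type*} {G : ι → E → ℝ}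
    (hG : ∀ i, LipschitzWith K (G i)) (hm : Measurable h) (hC : ∀ u, ‖h u‖ ≤ C)
    (hGh : ∀ i u, ‖fderiv ℝ (G i) u‖ ≤ h u) :
    ∀ᵐ x ∂μ, ∀ η > 0, ∀ᶠ y in 𝓝 x, ∀ i, |G i y - G i x| ≤ (h x + η) * dist y x := by
  have hloc : LocallyIntegrable h μ := fun x =>
    ⟨closedBall x 1, closedBall_mem_nhds x one_pos, Measure.integrableOn_of_bounded
      measure_closedBall_lt_top.ne hm.aestronglyMeasurable (.of_forall hC)⟩
  filter_upwards [IsUnifLocDoublingMeasure.ae_tendsto_average_norm_sub μ hloc 1] with x hx η hη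
  obtain ⟨ε, hε, hε1, hKε⟩ : ∃ ε : ℝ, 0 < ε ∧ ε ≤ 1 ∧ 2 * K * ε ≤ η / 2 :=
    ⟨min 1 (η / (4 * K + 1)), by positivity, min_le_left _ _, by
      calc 2 * K * min 1 (η / (4 * K + 1)) ≤ 2 * K * (η / (4 * K + 1)) := by
            gcongr; exact min_le_right _ _
        _ ≤ η / 2 := by rw [mul_div_assoc', div_le_div_iff₀ (by positivity) two_pos]; nlinarith⟩
  have hpow : 0 < (4 / ε) ^ finrank ℝ E := by positivity
  have havg : ∀ᶠ y in 𝓝[≠] x,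
      ⨍ u in closedBall x (2 * dist y x), ‖h u - h x‖ ∂μ < η / 2 / (4 / ε) ^ finrank ℝ E := by
    refine (hx (fun _ => x) (fun y => 2 * dist y x) ?_ (.of_forall fun y => ?_)).eventually
      (gt_mem_nhds (by positivity))
    · refine tendsto_nhdsWithin_iff.2 ⟨?_, eventually_nhdsWithin_of_forall fun y hy => ?_⟩
      · simpa using (((continuous_id.dist (continuous_const (y := x))).tendsto x).mono_left
          nhdsWithin_le_nhds).const_mul (2 : ℝ)
      · exact mul_pos two_pos (dist_pos.2 hy)
    · simp [mul_nonneg zero_le_two dist_nonneg]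
  filter_upwards [eventually_nhdsWithin_iff.1 havg] with y hy i
  rcases eq_or_ne y x with rfl | hyx
  · simp
  set r := dist y x
  have hr : 0 < r := dist_pos.2 hyx
  have hbound := (hG i).abs_sub_le_of_norm_fderiv_le (μ := μ) hm hC (hGh i) (mul_pos hε hr)
    (mul_le_of_le_one_left hr.le hε1)
  rw [inv_measureReal_closedBall_mul_setIntegral x 0 (by positivity) (by positivity),
    show 2 * r / (ε * r / 2) = 4 / ε by field_simp; ring] at hbound
  have hsmall := (lt_div_iff₀' hpow).1 (hy hyx)
  calc |G i y - G i x| ≤ r * (h x + (4 / ε) ^ finrank ℝ E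
        * ⨍ u in closedBall x (2 * r), ‖h u - h x‖ ∂μ) + 2 * (K * (ε * r)) := hbound
    _ = r * (h x + (4 / ε) ^ finrank ℝ E * ⨍ u in closedBall x (2 * r), ‖h u - h x‖ ∂μ
        + 2 * K * ε) := by ring
    _ ≤ r * (h x + η / 2 + η / 2) := by gcongr
    _ = (h x + η) * r := by ring

end LebesguePoints

section SeparableTarget

variable {Y : Type*} [MetricSpace Y]

lemma DenseRange.dist_le_of_forall_abs_dist_sub_le {ι : Type*} {e : ι → Y} (he : DenseRange e)
    {a b : Y} {C : ℝ} (h : ∀ i, |dist a (e i) - dist b (e i)| ≤ C) : dist a b ≤ C := by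
  refine le_of_forall_pos_le_add fun η hη => ?_
  obtain ⟨i, hi⟩ : ∃ i, dist b (e i) < η / 2 := denseRange_iff.1 he b (η / 2) (by positivity)
  linarith [dist_triangle a (e i) b, dist_comm b (e i), (abs_le.1 (h i)).2]

variable {E : Type*} [NormedAddCommGroup E] [NormedSpace ℝ E] [FiniteDimensional ℝ E]
  [MeasurableSpace E] [BorelSpace E] {μ : Measure E} [μ.IsAddHaarMeasure]

theorem ae_lipOn_le_iSup_norm_fderiv_dist [Nontrivial E] [TopologicalSpace.SeparableSpace Y]
    {U : Set E} (hU : IsOpen U) {f : E → Y} {K : NNReal} (hf : LipschitzOnWith K f U) :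
    ∀ᵐ x ∂μ.restrict U, lipOn f U x ≤ ⨆ p : Y, ‖fderiv ℝ (fun z => dist (f z) p) x‖ := by
  have : Nonempty Y := ⟨f 0⟩
  set e := TopologicalSpace.denseSeq Y
  have hdist : ∀ p : Y, LipschitzOnWith K (fun z => dist (f z) p) U := fun p => by
    simpa [Function.comp_def] using (LipschitzWith.dist_left p).comp_lipschitzOnWith hf
  choose G hG hGf using fun n => (hdist (e n)).extend_real
  set h : E → ℝ := fun u => ⨆ n, ‖fderiv ℝ (G n) u‖
  have hGK : ∀ n u, ‖fderiv ℝ (G n) u‖ ≤ K := fun n u => norm_fderiv_le_of_lipschitz ℝ (hG n)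
  have hGh : ∀ n u, ‖fderiv ℝ (G n) u‖ ≤ h u := fun n u =>
    le_ciSup (f := fun n => ‖fderiv ℝ (G n) u‖) ⟨K, Set.forall_mem_range.2 (hGK · u)⟩ n
  have hC : ∀ u, ‖h u‖ ≤ K := fun u => by
    rw [Real.norm_of_nonneg ((norm_nonneg _).trans (hGh 0 u))]
    exact ciSup_le (hGK · u)
  have hm : Measurable h := .iSup fun n => (measurable_fderiv ℝ (G n)).norm
  filter_upwards [ae_restrict_of_ae (ae_eventually_abs_sub_le_of_norm_fderiv_le hG hm hC hGh),
    ae_restrict_mem hU.measurableSet] with x hx hxU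
  calc lipOn f U x ≤ h x := lipOn_le_of_forall_eventually_dist_le hU hxU fun η hη => by
        filter_upwards [hx η hη, hU.mem_nhds hxU] with y hy hyU
        refine (TopologicalSpace.denseRange_denseSeq Y).dist_le_of_forall_abs_dist_sub_le
          fun n => ?_
        have := hy n
        rwa [← hGf n hyU, ← hGf n hxU] at this
    _ ≤ ⨆ p : Y, ‖fderiv ℝ (fun z => dist (f z) p) x‖ := ciSup_le fun n => by
        have hGn : G n =ᶠ[𝓝 x] fun z => dist (f z) (e n) :=
          eventually_of_mem (hU.mem_nhds hxU) fun z hz => (hGf n hz).symm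
        rw [hGn.fderiv_eq]
        exact le_ciSup (f := fun p => ‖fderiv ℝ (fun z => dist (f z) p) x‖)
          ⟨(K : ℝ), Set.forall_mem_range.2 fun p =>
            norm_fderiv_le_of_lipschitzOn ℝ (hU.mem_nhds hxU) (hdist p)⟩ (e n)

end SeparableTarget

/-- For a Lipschitz function `f` on an open set `U ⊆ ℝ^N` with separable target,
for a.e. `x₀ ∈ U` the pointwise Lipschitz constant equals the supremum over
`p ∈ Y` of the gradient norm of `x ↦ dist (f x) p` at `x₀` (the gradient norm
being `0`, via `fderiv = 0`, at non-differentiability points). -/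
theorem stmt2 {N : ℕ} {Y : Type*} [MetricSpace Y] [TopologicalSpace.SeparableSpace Y]
    (U : Set (EuclideanSpace ℝ (Fin N))) (hU : IsOpen U)
    (f : EuclideanSpace ℝ (Fin N) → Y) (K : NNReal) (hf : LipschitzOnWith K f U) :
    ∀ᵐ x₀ ∂(volume.restrict U),
      lipOn f U x₀ = ⨆ p : Y, ‖fderiv ℝ (fun x => dist (f x) p) x₀‖ := by
  rcases subsingleton_or_nontrivial (EuclideanSpace ℝ (Fin N)) with hE | hE
  · refine .of_forall fun x => ?_
    simp [lipOn_eq_zero_of_subsingleton, Subsingleton.elim (fderiv ℝ _ x) 0]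
  · filter_upwards [ae_lipOn_le_iSup_norm_fderiv_dist hU hf, ae_restrict_mem hU.measurableSet]
      with x hle hx
    exact hle.antisymm (iSup_norm_fderiv_dist_le_lipOn hU hx hf)
end

section
/- Let x₀ ∈ X ⊆ ℝ^N and u : X → Y ⊆ ℝ^N, with x₀ non-isolated. Then r_u(x₀) := e_u(x₀) + c_u(x₀) = 2 if and only if for every ε > 0 there exists r_ε > 0 such that (1/(1+ε))|x−x₀| ≤ |u(x)−u(x₀)| ≤ (1+ε)|x−x₀| for all x ∈ X ∩ ball(x₀, r_ε). -/
open Filter Topology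

/-- The pointwise contraction energy of `f` at `x`. -/
noncomputable def clip {X Y : Type*} [MetricSpace X] [MetricSpace Y]
    (f : X → Y) (x : X) : ENNReal :=
  limsup (fun y => edist y x / edist (f y) (f x)) (𝓝[≠] x)

private lemma aux_eq_one {x : ENNReal} (h : x + x⁻¹ ≤ 2) : x = 1 := by
  rcases eq_or_ne x 0 with rfl | h0
  · simp at h
  rcases eq_or_ne x ⊤ with rfl | htop
  · simp at h
  have hx : 0 < x.toReal := ENNReal.toReal_pos h0 htop
  have hinv : x⁻¹ ≠ ⊤ := ENNReal.inv_ne_top.2 h0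
  have h2 : (x + x⁻¹).toReal ≤ (2 : ENNReal).toReal :=
    ENNReal.toReal_mono (by norm_num) h
  rw [ENNReal.toReal_add htop hinv, ENNReal.toReal_inv] at h2
  norm_num at h2
  have h4 : x.toReal * x.toReal + 1 ≤ 2 * x.toReal := by
    have h5 := mul_le_mul_of_nonneg_left h2 hx.le
    rw [mul_add, mul_inv_cancel₀ hx.ne'] at h5
    nlinarith
  have h3 : x.toReal = 1 := by nlinarith [sq_nonneg (x.toReal - 1)]
  exact x.toReal_eq_one_iff.1 h3

private lemma div_ofReal_le {D d t : ℝ} (hd : 0 < d) (ht : 0 ≤ t) :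
    ENNReal.ofReal D / ENNReal.ofReal d ≤ ENNReal.ofReal t ↔ D ≤ t * d := by
  rw [ENNReal.div_le_iff_le_mul (Or.inl (ENNReal.ofReal_pos.2 hd).ne')
      (Or.inl ENNReal.ofReal_ne_top),
    ← ENNReal.ofReal_mul ht, ENNReal.ofReal_le_ofReal_iff (mul_nonneg ht hd.le)]

private lemma le_div_ofReal {D d s : ℝ} (hd : 0 < d) (hD : 0 ≤ D) (hs : 0 ≤ s) :
    ENNReal.ofReal s ≤ ENNReal.ofReal D / ENNReal.ofReal d ↔ s * d ≤ D := by
  rw [ENNReal.le_div_iff_mul_le (Or.inl (ENNReal.ofReal_pos.2 hd).ne')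
      (Or.inl ENNReal.ofReal_ne_top),
    ← ENNReal.ofReal_mul hs, ENNReal.ofReal_le_ofReal_iff hD]

/-- `r_u(x₀) = e_u(x₀) + c_u(x₀) = 2` iff for every `ε > 0` there is `r_ε > 0`
such that `(1/(1+ε))|x-x₀| ≤ |u(x)-u(x₀)| ≤ (1+ε)|x-x₀|` for all
`x ∈ X ∩ ball(x₀, r_ε)`. -/
theorem stmt8 {N : ℕ} (X Y : Set (EuclideanSpace ℝ (Fin N)))
    (u : X → Y) (x₀ : X) (hx : (𝓝[≠] x₀).NeBot) :
    elip u x₀ + clip u x₀ = 2 ↔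
      ∀ ε : ℝ, 0 < ε → ∃ r : ℝ, 0 < r ∧ ∀ x : X, dist x x₀ < r →
        (1 / (1 + ε)) * dist (x : EuclideanSpace ℝ (Fin N)) (x₀ : EuclideanSpace ℝ (Fin N))
            ≤ dist (u x : EuclideanSpace ℝ (Fin N)) (u x₀ : EuclideanSpace ℝ (Fin N)) ∧
        dist (u x : EuclideanSpace ℝ (Fin N)) (u x₀ : EuclideanSpace ℝ (Fin N))
            ≤ (1 + ε) * dist (x : EuclideanSpace ℝ (Fin N)) (x₀ : EuclideanSpace ℝ (Fin N)) := by
  set a : X → ENNReal := fun y => edist (u y) (u x₀) / edist y x₀ with ha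
  -- basic facts on the punctured neighborhood filter
  have hne : ∀ᶠ y in 𝓝[≠] x₀, y ≠ x₀ := self_mem_nhdsWithin
  -- clip is the limsup of the inverse
  have hclip : clip u x₀ = limsup (fun y => (a y)⁻¹) (𝓝[≠] x₀) := by
    refine limsup_congr ?_
    filter_upwards [hne] with y hy
    rw [ha, ENNReal.inv_div (Or.inl (edist_ne_top _ _))
      (Or.inl ((edist_pos.2 hy).ne'))]
  have hclip' : clip u x₀ = (liminf a (𝓝[≠] x₀))⁻¹ := by
    rw [hclip, ENNReal.inv_liminf]
  -- rephrase as limsup = 1 and liminf = 1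
  have hmain : elip u x₀ + clip u x₀ = 2 ↔
      limsup a (𝓝[≠] x₀) = 1 ∧ liminf a (𝓝[≠] x₀) = 1 := by
    constructor
    · intro h
      have hle : liminf a (𝓝[≠] x₀) ≤ limsup a (𝓝[≠] x₀) := liminf_le_limsup
      have hc : (limsup a (𝓝[≠] x₀))⁻¹ ≤ clip u x₀ := by
        rw [hclip']; exact ENNReal.inv_le_inv.2 hle
      have h2 : limsup a (𝓝[≠] x₀) + (limsup a (𝓝[≠] x₀))⁻¹ ≤ 2 := by
        calc limsup a (𝓝[≠] x₀) + (limsup a (𝓝[≠] x₀))⁻¹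
            ≤ elip u x₀ + clip u x₀ := add_le_add le_rfl hc
          _ = 2 := h
      have he1 : limsup a (𝓝[≠] x₀) = 1 := aux_eq_one h2
      have hc1 : clip u x₀ = 1 := by
        have : elip u x₀ + clip u x₀ = 1 + 1 := by rw [h]; norm_num
        rw [show elip u x₀ = limsup a (𝓝[≠] x₀) from rfl, he1] at this
        exact (ENNReal.add_right_inj (by norm_num)).1 this
      refine ⟨he1, ?_⟩
      have := hclip'.symm.trans hc1
      rw [← inv_inv (liminf a (𝓝[≠] x₀)), this, inv_one]
    · rintro ⟨h1, h2⟩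
      rw [show elip u x₀ = limsup a (𝓝[≠] x₀) from rfl, h1, hclip', h2, inv_one]
      norm_num
  rw [hmain]
  constructor
  · rintro ⟨h1, h2⟩ ε hε
    have hub : limsup a (𝓝[≠] x₀) < ENNReal.ofReal (1 + ε) := by
      rw [h1, ← ENNReal.ofReal_one]
      exact ENNReal.ofReal_lt_ofReal_iff (by linarith) |>.2 (by linarith)
    have hlb : ENNReal.ofReal (1 / (1 + ε)) < liminf a (𝓝[≠] x₀) := by
      rw [h2, ← ENNReal.ofReal_one]
      refine ENNReal.ofReal_lt_ofReal_iff (by norm_num) |>.2 ?_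
      rw [div_lt_one (by linarith)]; linarith
    have hev := (eventually_lt_of_limsup_lt hub).and (eventually_lt_of_lt_liminf hlb)
    have hev' := hev.and hne
    rw [eventually_iff, Metric.mem_nhdsWithin_iff] at hev'
    obtain ⟨r, hr, hball⟩ := hev'
    refine ⟨r, hr, fun x hxr => ?_⟩
    rcases eq_or_ne x x₀ with rfl | hxx
    · simp
    · have hmem : x ∈ Metric.ball x₀ r ∩ {x₀}ᶜ := ⟨Metric.mem_ball.2 hxr, hxx⟩
      obtain ⟨⟨hu1, hu2⟩, -⟩ := hball hmem
      have hd : (0:ℝ) < dist (x : EuclideanSpace ℝ (Fin N)) (x₀ : EuclideanSpace ℝ (Fin N)) := by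
        rw [← Subtype.dist_eq]
        exact dist_pos.2 hxx
      have hax : a x = ENNReal.ofReal (dist (u x : EuclideanSpace ℝ (Fin N)) (u x₀ : EuclideanSpace ℝ (Fin N))) /
          ENNReal.ofReal (dist (x : EuclideanSpace ℝ (Fin N)) (x₀ : EuclideanSpace ℝ (Fin N))) := by
        rw [ha]
        simp only [Subtype.edist_eq, edist_dist, Subtype.dist_eq]
      rw [hax] at hu1 hu2
      constructor
      · exact (le_div_ofReal hd dist_nonneg (by positivity)).1 hu2.le
      · have := (div_ofReal_le hd (by linarith)).1 hu1.le
        exact this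
  · intro h
    have key : ∀ ε : ℝ, 0 < ε →
        (∀ᶠ y in 𝓝[≠] x₀, ENNReal.ofReal (1 / (1 + ε)) ≤ a y ∧ a y ≤ ENNReal.ofReal (1 + ε)) := by
      intro ε hε
      obtain ⟨r, hr, hall⟩ := h ε hε
      rw [eventually_iff, Metric.mem_nhdsWithin_iff]
      refine ⟨r, hr, fun y hy => ?_⟩
      obtain ⟨hy1, hy2⟩ := hy
      have hyr : dist y x₀ < r := Metric.mem_ball.1 hy1
      obtain ⟨hl, hu⟩ := hall y hyr
      have hd : (0:ℝ) < dist (y : EuclideanSpace ℝ (Fin N)) (x₀ : EuclideanSpace ℝ (Fin N)) := by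
        rw [← Subtype.dist_eq]
        exact dist_pos.2 hy2
      have hay : a y = ENNReal.ofReal (dist (u y : EuclideanSpace ℝ (Fin N)) (u x₀ : EuclideanSpace ℝ (Fin N))) /
          ENNReal.ofReal (dist (y : EuclideanSpace ℝ (Fin N)) (x₀ : EuclideanSpace ℝ (Fin N))) := by
        rw [ha]
        simp only [Subtype.edist_eq, edist_dist, Subtype.dist_eq]
      simp only [Set.mem_setOf_eq]
      rw [hay]
      exact ⟨(le_div_ofReal hd dist_nonneg (by positivity)).2 hl,
        (div_ofReal_le hd (by linarith)).2 hu⟩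
    have hup : limsup a (𝓝[≠] x₀) ≤ 1 := by
      refine ENNReal.le_of_forall_pos_le_add fun ε hε _ => ?_
      have hev := (key ε hε).mono fun y hy => hy.2
      have := limsup_le_of_le (by isBoundedDefault) hev
      calc limsup a (𝓝[≠] x₀) ≤ ENNReal.ofReal (1 + ε) := this
        _ = 1 + (ε : ENNReal) := by
            rw [ENNReal.ofReal_add zero_le_one ε.coe_nonneg, ENNReal.ofReal_one,
              ENNReal.ofReal_coe_nnreal]
    have hlow : 1 ≤ liminf a (𝓝[≠] x₀) := by
      rw [← ENNReal.inv_le_one]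
      refine ENNReal.le_of_forall_pos_le_add fun ε hε _ => ?_
      have hev := (key ε hε).mono fun y hy => hy.1
      have h1 : ENNReal.ofReal (1 / (1 + ε)) ≤ liminf a (𝓝[≠] x₀) :=
        le_liminf_of_le (by isBoundedDefault) hev
      have h2 : (liminf a (𝓝[≠] x₀))⁻¹ ≤ (ENNReal.ofReal (1 / (1 + ε)))⁻¹ :=
        ENNReal.inv_le_inv.2 h1
      have h3 : (ENNReal.ofReal (1 / (1 + ε)))⁻¹ = ENNReal.ofReal (1 + ε) := by
        rw [one_div, ENNReal.ofReal_inv_of_pos (by positivity), inv_inv]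
      rw [h3] at h2
      calc (liminf a (𝓝[≠] x₀))⁻¹ ≤ ENNReal.ofReal (1 + ε) := h2
        _ = 1 + (ε : ENNReal) := by
            rw [ENNReal.ofReal_add zero_le_one ε.coe_nonneg, ENNReal.ofReal_one,
              ENNReal.ofReal_coe_nnreal]
    have hll : liminf a (𝓝[≠] x₀) ≤ limsup a (𝓝[≠] x₀) := liminf_le_limsup
    exact ⟨le_antisymm hup (hlow.trans hll), le_antisymm (hll.trans hup) hlow⟩
end

section
/- Let Ω ⊆ ℝ^N be open, x₀ ∈ Ω, and u : Ω → ℝ^N differentiable at x₀. If e_u(x₀) = 1 and c_u(x₀) = 1 (equivalently r_u(x₀) = e_u(x₀) + c_u(x₀) = 2), then the derivative Du(x₀) is an orthogonal matrix, i.e., |Du(x₀)·v| = |v| for every v ∈ ℝ^N. -/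
open Filter Topology

/-- The pointwise expansion energy of `f` at `x` relative to `U`. -/
noncomputable def elipOn {E Y : Type*} [MetricSpace E] [MetricSpace Y]
    (f : E → Y) (U : Set E) (x : E) : ENNReal :=
  limsup (fun y => edist (f y) (f x) / edist y x) (𝓝[U \ {x}] x)

/-- The pointwise contraction energy of `f` at `x` relative to `U`. -/
noncomputable def clipOn {E Y : Type*} [MetricSpace E] [MetricSpace Y]
    (f : E → Y) (U : Set E) (x : E) : ENNReal :=
  limsup (fun y => edist y x / edist (f y) (f x)) (𝓝[U \ {x}] x)

/-!
Along the ray `t ↦ x₀ + t • v`, `t → 0⁺`, the difference quotient `|u(y) - u(x₀)| / |y - x₀|`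
tends to `|Du(x₀) v| / |v|`. Both energies are limsups over the whole punctured neighbourhood,
so they dominate the limits along the ray: `|Du(x₀) v| / |v| ≤ e_u(x₀) = 1` and
`|v| / |Du(x₀) v| ≤ c_u(x₀) = 1`.
-/

section Energies

variable {E Y ι : Type*} [MetricSpace E] [MetricSpace Y] {f : E → Y} {U : Set E} {x : E}
  {g : ι → E} {l : Filter ι} [l.NeBot] {c : ENNReal}

theorem le_elipOn_of_tendsto (hg : Tendsto g l (𝓝[U \ {x}] x))
    (hf : Tendsto (fun s => edist (f (g s)) (f x) / edist (g s) x) l (𝓝 c)) :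
    c ≤ elipOn f U x := by
  have hmap : Tendsto (fun y => edist (f y) (f x) / edist y x) (map g l) (𝓝 c) :=
    tendsto_map'_iff.mpr hf
  exact hmap.limsup_eq ▸ limsup_le_limsup_of_le hg

theorem inv_le_clipOn_of_tendsto (hg : Tendsto g l (𝓝[U \ {x}] x))
    (hf : Tendsto (fun s => edist (f (g s)) (f x) / edist (g s) x) l (𝓝 c)) :
    c⁻¹ ≤ clipOn f U x := by
  have hinv : Tendsto (fun s => edist (g s) x / edist (f (g s)) (f x)) l (𝓝 c⁻¹) := by
    refine hf.inv.congr' ?_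
    filter_upwards [(tendsto_nhdsWithin_iff.mp hg).2] with s hs
    exact ENNReal.inv_div (Or.inl (edist_ne_top _ _)) (Or.inl (edist_pos.mpr hs.2).ne')
  have hmap : Tendsto (fun y => edist y x / edist (f y) (f x)) (map g l) (𝓝 c⁻¹) :=
    tendsto_map'_iff.mpr hinv
  exact hmap.limsup_eq ▸ limsup_le_limsup_of_le hg

end Energies

section Ray

variable {E F : Type*} [NormedAddCommGroup E] [NormedSpace ℝ E]
  [NormedAddCommGroup F] [NormedSpace ℝ F] {x v : E}

theorem tendsto_add_smul_nhdsGT_nhdsWithin_diff {U : Set E} (hU : U ∈ 𝓝 x) (hv : v ≠ 0) :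
    Tendsto (fun t : ℝ => x + t • v) (𝓝[>] 0) (𝓝[U \ {x}] x) := by
  have hcont : Tendsto (fun t : ℝ => x + t • v) (𝓝[>] 0) (𝓝 x) := by
    have h : Continuous fun t : ℝ => x + t • v := by fun_prop
    simpa using (h.tendsto 0).mono_left nhdsWithin_le_nhds
  refine tendsto_nhdsWithin_iff.mpr ⟨hcont, ?_⟩
  filter_upwards [hcont.eventually hU, self_mem_nhdsWithin] with t htU (ht : 0 < t)
  exact ⟨htU, by simp [ht.ne', hv]⟩

theorem HasFDerivAt.tendsto_edist_div_edist_along_ray {f : E → F} {A : E →L[ℝ] F}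
    (hf : HasFDerivAt f A x) (hv : v ≠ 0) :
    Tendsto (fun t : ℝ => edist (f (x + t • v)) (f x) / edist (x + t • v) x) (𝓝[>] 0)
      (𝓝 (ENNReal.ofReal (‖A v‖ / ‖v‖))) := by
  have hray : HasDerivAt (fun t : ℝ => f (x + t • v)) (A v) 0 := by
    have hline : HasDerivAt (fun t : ℝ => x + t • v) v 0 := by
      simpa using ((hasDerivAt_id (0 : ℝ)).smul_const v).const_add x
    exact (by simpa using hf : HasFDerivAt f A (x + (0 : ℝ) • v)).comp_hasDerivAt 0 hline
  have hslope : Tendsto (fun t : ℝ => ‖f (x + t • v) - f x‖ / t / ‖v‖) (𝓝[>] 0)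
      (𝓝 (‖A v‖ / ‖v‖)) := by
    refine (((hasDerivAt_iff_tendsto_slope.mp hray).mono_left
      (nhdsWithin_mono _ fun t (ht : 0 < t) => ht.ne')).norm.div_const _).congr' ?_
    filter_upwards [self_mem_nhdsWithin] with t (ht : 0 < t)
    simp [slope_def_module, norm_smul, _root_.abs_of_pos ht, div_eq_inv_mul]
  refine (ENNReal.tendsto_ofReal hslope).congr' ?_
  filter_upwards [self_mem_nhdsWithin] with t (ht : 0 < t)
  rw [div_div, ENNReal.ofReal_div_of_pos (mul_pos ht (norm_pos_iff.mpr hv)), edist_dist,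
    edist_dist, dist_eq_norm, dist_eq_norm, add_sub_cancel_left, norm_smul, Real.norm_of_nonneg ht.le]

end Ray

/-- If `u : Ω → ℝ^N` is differentiable at `x₀ ∈ Ω` and `e_u(x₀) = c_u(x₀) = 1`,
then the derivative `Du(x₀)` is an orthogonal matrix:
`|Du(x₀) v| = |v|` for every `v`. -/
theorem stmt11 {N : ℕ} (Ω : Set (EuclideanSpace ℝ (Fin N))) (hΩ : IsOpen Ω)
    (x₀ : EuclideanSpace ℝ (Fin N)) (hx₀ : x₀ ∈ Ω)
    (u : EuclideanSpace ℝ (Fin N) → EuclideanSpace ℝ (Fin N))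
    (A : EuclideanSpace ℝ (Fin N) →L[ℝ] EuclideanSpace ℝ (Fin N))
    (hdiff : HasFDerivAt u A x₀)
    (he : elipOn u Ω x₀ = 1) (hc : clipOn u Ω x₀ = 1) :
    ∀ v : EuclideanSpace ℝ (Fin N), ‖A v‖ = ‖v‖ := by
  intro v
  rcases eq_or_ne v 0 with rfl | hv
  · simp
  have hray := tendsto_add_smul_nhdsGT_nhdsWithin_diff (hΩ.mem_nhds hx₀) hv
  have hratio := hdiff.tendsto_edist_div_edist_along_ray hv
  have hle : ENNReal.ofReal (‖A v‖ / ‖v‖) ≤ 1 := he ▸ le_elipOn_of_tendsto hray hratio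
  have hge : (ENNReal.ofReal (‖A v‖ / ‖v‖))⁻¹ ≤ 1 := hc ▸ inv_le_clipOn_of_tendsto hray hratio
  have hone : ‖A v‖ / ‖v‖ = 1 :=
    ENNReal.ofReal_eq_one.mp (le_antisymm hle (ENNReal.inv_le_one.mp hge))
  rwa [div_eq_one_iff_eq (norm_ne_zero_iff.mpr hv)] at hone
end
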